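/- Let f : ℝ³ → ℝ be smooth with f > 0 everywhere, and consider the almost paracontact metric Walker structure with ξ₁ ≡ 0, ξ₂ ≡ 0, ξ₃ = 1/√f (so ξ = (1/√f)∂z, η = (1/√f)dx + √f dz, φ∂x = (1/√f)∂y, φ∂y = √f ∂x − (1/√f)∂z, φ∂z = 0). Then the structure lies strictly in the basic class G₁₂ — i.e. F is nonzero at every point and F(X,Y,Z) = η(X)(η(Y)F(ξ,ξ,Z) − η(Z)F(ξ,ξ,Y)) for all vector fields X,Y,Z — if and only if f_y ≡ 0, f_z ≡ 0 and f_x vanishes nowhere (Theorem 4.3(iii)). -/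

import Mathlib

/-!
With `s = √f`, the Christoffel symbols give the closed form
`F(X,Y,Z) = (f_x η(X)/(2s) + f_z X³/(2f)) ω(Y,Z) + (f_y/(2f)) (η(Y) β(X,Z) - η(Z) β(X,Y))`,
where `ω(Y,Z) = Y² η(Z) - η(Y) Z²`, `β(X,Z) = f X³ Z³ - X² Z²` and superscripts are
components in the frame `∂x, ∂y, ∂z`.
If `f_y = f_z = 0` only the first term survives; it has exactly the `G₁₂` shape, with
`F(ξ,ξ,Z) = -f_x Z²/(2s)`, and it vanishes at a point iff `f_x` does.
Conversely the `G₁₂` identity forces `F(X,·,·) = 0` for `X ∈ ker η = span(∂y, f∂x - ∂z)`,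
and `F(∂y,∂x,∂y)`, `F(f∂x - ∂z,∂x,∂y)` are nonzero multiples of `f_y`, `f_z`.
-/

open Real

/-- Points of the Walker manifold `M = ℝ³` with coordinates `(x,y,z)`. -/
abbrev Pt : Type := ℝ × ℝ × ℝ

/-- Vector fields on `ℝ³`, given by their components in the frame `∂x, ∂y, ∂z`. -/
abbrev VF : Type := Pt → Pt

/-- Partial derivative ∂/∂x. -/
noncomputable def pdx (F : Pt → ℝ) (p : Pt) : ℝ := fderiv ℝ F p ((1:ℝ), (0:ℝ), (0:ℝ))

/-- Partial derivative ∂/∂y. -/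
noncomputable def pdy (F : Pt → ℝ) (p : Pt) : ℝ := fderiv ℝ F p ((0:ℝ), (1:ℝ), (0:ℝ))

/-- Partial derivative ∂/∂z. -/
noncomputable def pdz (F : Pt → ℝ) (p : Pt) : ℝ := fderiv ℝ F p ((0:ℝ), (0:ℝ), (1:ℝ))

/-- Directional derivative of a scalar function along a vector field. -/
noncomputable def dd (X : VF) (F : Pt → ℝ) (p : Pt) : ℝ := fderiv ℝ F p (X p)

/-- Components of a tangent vector. -/
def c1 (v : Pt) : ℝ := v.1
def c2 (v : Pt) : ℝ := v.2.1
def c3 (v : Pt) : ℝ := v.2.2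

/-- The coordinate vector fields `∂x, ∂y, ∂z`. -/
noncomputable def E : Fin 3 → VF :=
  ![fun _ => ((1:ℝ), (0:ℝ), (0:ℝ)), fun _ => ((0:ℝ), (1:ℝ), (0:ℝ)),
    fun _ => ((0:ℝ), (0:ℝ), (1:ℝ))]

/-- The Walker metric with `ε = 1`: `g(∂x,∂z) = g(∂z,∂x) = 1`, `g(∂y,∂y) = 1`,
`g(∂z,∂z) = f`, all other components zero. -/
noncomputable def gm (f : Pt → ℝ) (X Y : VF) (p : Pt) : ℝ :=
  c1 (X p) * c3 (Y p) + c3 (X p) * c1 (Y p) + c2 (X p) * c2 (Y p)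
    + f p * c3 (X p) * c3 (Y p)

/-- The Levi-Civita connection of the Walker metric:
`∇_{∂x}∂z = ∇_{∂z}∂x = (1/2) f_x ∂x`, `∇_{∂y}∂z = ∇_{∂z}∂y = (1/2) f_y ∂x`,
`∇_{∂z}∂z = (1/2)(f f_x + f_z) ∂x - (1/2) f_y ∂y - (1/2) f_x ∂z`, all other covariant
derivatives of coordinate fields zero, extended by `C^∞`-linearity below and the
Leibniz rule above. -/
noncomputable def cov (f : Pt → ℝ) (X Y : VF) : VF := fun p =>
  ( dd X (fun q => c1 (Y q)) p
      + (1/2) * pdx f p * (c1 (X p) * c3 (Y p) + c3 (X p) * c1 (Y p))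
      + (1/2) * pdy f p * (c2 (X p) * c3 (Y p) + c3 (X p) * c2 (Y p))
      + (1/2) * (f p * pdx f p + pdz f p) * (c3 (X p) * c3 (Y p)),
    dd X (fun q => c2 (Y q)) p - (1/2) * pdy f p * (c3 (X p) * c3 (Y p)),
    dd X (fun q => c3 (Y q)) p - (1/2) * pdx f p * (c3 (X p) * c3 (Y p)) )

/-- Lie bracket of vector fields on `ℝ³`. -/
noncomputable def brk (X Y : VF) : VF := fun p =>
  ( dd X (fun q => c1 (Y q)) p - dd Y (fun q => c1 (X q)) p,
    dd X (fun q => c2 (Y q)) p - dd Y (fun q => c2 (X q)) p,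
    dd X (fun q => c3 (Y q)) p - dd Y (fun q => c3 (X q)) p )

/-- The `(1,1)`-tensor `φ` of the almost paracontact metric Walker structure:
`φ∂x = -ξ₂∂x + ξ₃∂y`, `φ∂y = (ξ₁ + fξ₃)∂x - ξ₃∂z`, `φ∂z = -fξ₂∂x - ξ₁∂y + ξ₂∂z`. -/
noncomputable def phiV (f ξ₁ ξ₂ ξ₃ : Pt → ℝ) (X : VF) : VF := fun p =>
  ( -ξ₂ p * c1 (X p) + (ξ₁ p + f p * ξ₃ p) * c2 (X p) - f p * ξ₂ p * c3 (X p),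
    ξ₃ p * c1 (X p) - ξ₁ p * c3 (X p),
    -ξ₃ p * c2 (X p) + ξ₂ p * c3 (X p) )

/-- The 1-form `η = ξ₃ dx + ξ₂ dy + (ξ₁ + fξ₃) dz`. -/
noncomputable def etaV (f ξ₁ ξ₂ ξ₃ : Pt → ℝ) (X : VF) (p : Pt) : ℝ :=
  ξ₃ p * c1 (X p) + ξ₂ p * c2 (X p) + (ξ₁ p + f p * ξ₃ p) * c3 (X p)

/-- The structure tensor `F(X,Y,Z) = g((∇_X φ)Y, Z)`, `(∇_X φ)Y = ∇_X(φY) - φ(∇_X Y)`. -/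
noncomputable def Ften (f ξ₁ ξ₂ ξ₃ : Pt → ℝ) (X Y Z : VF) (p : Pt) : ℝ :=
  gm f (fun q => cov f X (phiV f ξ₁ ξ₂ ξ₃ Y) q - phiV f ξ₁ ξ₂ ξ₃ (cov f X Y) q) Z p

/-- The fundamental 2-form `Φ(X,Y) = g(φX, Y)`. -/
noncomputable def Phi2 (f ξ₁ ξ₂ ξ₃ : Pt → ℝ) (X Y : VF) : Pt → ℝ :=
  gm f (phiV f ξ₁ ξ₂ ξ₃ X) Y

/-- `dη(∂i,∂j) = (1/2)(∂i(η(∂j)) - ∂j(η(∂i)))` on coordinate fields. -/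
noncomputable def deta (f ξ₁ ξ₂ ξ₃ : Pt → ℝ) (i j : Fin 3) (p : Pt) : ℝ :=
  (1/2) * (dd (E i) (etaV f ξ₁ ξ₂ ξ₃ (E j)) p - dd (E j) (etaV f ξ₁ ξ₂ ξ₃ (E i)) p)

/-- `dη(X,Y) = (1/2)(X(η(Y)) - Y(η(X)) - η([X,Y]))` on general vector fields. -/
noncomputable def detaB (f ξ₁ ξ₂ ξ₃ : Pt → ℝ) (X Y : VF) (p : Pt) : ℝ :=
  (1/2) * (dd X (etaV f ξ₁ ξ₂ ξ₃ Y) p - dd Y (etaV f ξ₁ ξ₂ ξ₃ X) p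
    - etaV f ξ₁ ξ₂ ξ₃ (brk X Y) p)

/-- The Nijenhuis tensor `N(X,Y) = φ²[X,Y] + [φX,φY] - φ[φX,Y] - φ[X,φY]`. -/
noncomputable def nij (f ξ₁ ξ₂ ξ₃ : Pt → ℝ) (X Y : VF) : VF := fun p =>
  phiV f ξ₁ ξ₂ ξ₃ (phiV f ξ₁ ξ₂ ξ₃ (brk X Y)) p
    + brk (phiV f ξ₁ ξ₂ ξ₃ X) (phiV f ξ₁ ξ₂ ξ₃ Y) p
    - phiV f ξ₁ ξ₂ ξ₃ (brk (phiV f ξ₁ ξ₂ ξ₃ X) Y) p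
    - phiV f ξ₁ ξ₂ ξ₃ (brk X (phiV f ξ₁ ξ₂ ξ₃ Y)) p

/-- The curvature tensor, with the paper's sign convention
`R(X,Y)Z = ∇_{[X,Y]}Z - ∇_X∇_Y Z + ∇_Y∇_X Z`. -/
noncomputable def Rop (f : Pt → ℝ) (X Y Z : VF) : VF := fun p =>
  cov f (brk X Y) Z p - cov f X (cov f Y Z) p + cov f Y (cov f X Z) p

/-- Second partial derivatives of `f`. -/
noncomputable def fxx (f : Pt → ℝ) : Pt → ℝ := pdx (pdx f)
noncomputable def fxy (f : Pt → ℝ) : Pt → ℝ := pdy (pdx f)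
noncomputable def fyy (f : Pt → ℝ) : Pt → ℝ := pdy (pdy f)

/-- The Ricci tensor of the Walker metric: `ρ(∂x,∂z) = ρ(∂z,∂x) = (1/2) f_xx`,
`ρ(∂y,∂z) = ρ(∂z,∂y) = (1/2) f_xy`, `ρ(∂z,∂z) = (1/2)(f f_xx - f_yy)`, all other
components zero, extended tensorially. -/
noncomputable def rhoT (f : Pt → ℝ) (X Y : VF) (p : Pt) : ℝ :=
  (1/2) * fxx f p * (c1 (X p) * c3 (Y p) + c3 (X p) * c1 (Y p))
    + (1/2) * fxy f p * (c2 (X p) * c3 (Y p) + c3 (X p) * c2 (Y p))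
    + (1/2) * (f p * fxx f p - fyy f p) * (c3 (X p) * c3 (Y p))

/-- The Ricci operator: `Q∂x = (1/2)f_xx ∂x`, `Q∂y = (1/2)f_xy ∂x`,
`Q∂z = -(1/2)f_yy ∂x + (1/2)f_xy ∂y + (1/2)f_xx ∂z`. -/
noncomputable def Qop (f : Pt → ℝ) (X : VF) : VF := fun p =>
  ( (1/2) * fxx f p * c1 (X p) + (1/2) * fxy f p * c2 (X p) - (1/2) * fyy f p * c3 (X p),
    (1/2) * fxy f p * c3 (X p),
    (1/2) * fxx f p * c3 (X p) )

/-- `dΦ(∂x,∂y,∂z) = ∂x(Φ(∂y,∂z)) - ∂y(Φ(∂x,∂z)) + ∂z(Φ(∂x,∂y))`. -/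
noncomputable def dPhi (f ξ₁ ξ₂ ξ₃ : Pt → ℝ) (p : Pt) : ℝ :=
  pdx (Phi2 f ξ₁ ξ₂ ξ₃ (E 1) (E 2)) p - pdy (Phi2 f ξ₁ ξ₂ ξ₃ (E 0) (E 2)) p
    + pdz (Phi2 f ξ₁ ξ₂ ξ₃ (E 0) (E 1)) p

/-- `(η∧Φ)(∂x,∂y,∂z) = η(∂x)Φ(∂y,∂z) - η(∂y)Φ(∂x,∂z) + η(∂z)Φ(∂x,∂y)`. -/
noncomputable def etaWedgePhi (f ξ₁ ξ₂ ξ₃ : Pt → ℝ) (p : Pt) : ℝ :=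
  etaV f ξ₁ ξ₂ ξ₃ (E 0) p * Phi2 f ξ₁ ξ₂ ξ₃ (E 1) (E 2) p
    - etaV f ξ₁ ξ₂ ξ₃ (E 1) p * Phi2 f ξ₁ ξ₂ ξ₃ (E 0) (E 2) p
    + etaV f ξ₁ ξ₂ ξ₃ (E 2) p * Phi2 f ξ₁ ξ₂ ξ₃ (E 0) (E 1) p

/-- The constant function `0`. -/
noncomputable def zeroF : Pt → ℝ := fun _ => 0
/-- The constant function `1`. -/
noncomputable def oneF : Pt → ℝ := fun _ => 1
/-- The constant function `-1`. -/
noncomputable def negOneF : Pt → ℝ := fun _ => -1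

/-- The coordinate `ξ₃ = 1/√f` of the structure of Theorem 4.3. -/
noncomputable def xi3s (f : Pt → ℝ) : Pt → ℝ := fun p => 1 / Real.sqrt (f p)

/-- The Reeb vector field `ξ = (1/√f)∂z`. -/
noncomputable def xiVs (f : Pt → ℝ) : VF := fun p => ((0:ℝ), (0:ℝ), 1 / Real.sqrt (f p))

noncomputable def etaAt (f : Pt → ℝ) (p u : Pt) : ℝ := (u.1 + f p * u.2.2) / √(f p)

noncomputable def omegaAt (f : Pt → ℝ) (p v w : Pt) : ℝ :=
  v.2.1 * etaAt f p w - etaAt f p v * w.2.1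

noncomputable def betaAt (f : Pt → ℝ) (p u w : Pt) : ℝ := f p * u.2.2 * w.2.2 - u.2.1 * w.2.1

noncomputable def structureTensorAt (f : Pt → ℝ) (p u v w : Pt) : ℝ :=
  (pdx f p * etaAt f p u / (2 * √(f p)) + pdz f p * u.2.2 / (2 * f p)) * omegaAt f p v w
    + pdy f p / (2 * f p) * (etaAt f p v * betaAt f p u w - etaAt f p w * betaAt f p u v)

lemma fderiv_apply_eq_partials (F : Pt → ℝ) (p u : Pt) :
    fderiv ℝ F p u = u.1 * pdx F p + u.2.1 * pdy F p + u.2.2 * pdz F p := by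
  have hu : u = u.1 • ((1:ℝ), (0:ℝ), (0:ℝ)) + u.2.1 • ((0:ℝ), (1:ℝ), (0:ℝ))
      + u.2.2 • ((0:ℝ), (0:ℝ), (1:ℝ)) := by
    ext <;> simp
  conv_lhs => rw [hu]
  simp only [map_add, map_smul, smul_eq_mul, pdx, pdy, pdz]

lemma etaV_xi3s (f : Pt → ℝ) (X : VF) (p : Pt) :
    etaV f zeroF zeroF (xi3s f) X p = etaAt f p (X p) := by
  simp only [etaV, etaAt, zeroF, xi3s, c1, c2, c3]
  ring

lemma phiV_xi3s (f : Pt → ℝ) (Y : VF) (q : Pt) :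
    phiV f zeroF zeroF (xi3s f) Y q
      = (√(f q) * (Y q).2.1, (√(f q))⁻¹ * (Y q).1, -((√(f q))⁻¹ * (Y q).2.1)) := by
  have h : f q * (√(f q))⁻¹ = √(f q) := by rw [← div_eq_mul_inv, Real.div_sqrt]
  simp only [phiV, zeroF, xi3s, c1, c2, c3, Prod.mk.injEq]
  refine ⟨?_, ?_, ?_⟩ <;> simp [h]

theorem Ften_eq_structureTensorAt {f : Pt → ℝ} {p : Pt} (hf : DifferentiableAt ℝ f p)
    (hfp : 0 < f p) (X Y Z : VF) (hY : DifferentiableAt ℝ Y p) :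
    Ften f zeroF zeroF (xi3s f) X Y Z p = structureTensorAt f p (X p) (Y p) (Z p) := by
  have hs0 : √(f p) ≠ 0 := (Real.sqrt_pos.2 hfp).ne'
  have hs : HasFDerivAt (fun q => √(f q)) ((1 / (2 * √(f p))) • fderiv ℝ f p) p :=
    hf.hasFDerivAt.sqrt hfp.ne'
  have hsi := (hasDerivAt_inv hs0).comp_hasFDerivAt p hs
  have hY1 := hY.fst.hasFDerivAt
  have hY2 := hY.snd.fst.hasFDerivAt
  have hφ1 : fderiv ℝ (fun q => √(f q) * (Y q).2.1) p = _ := (hs.mul hY2).fderiv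
  have hφ2 : fderiv ℝ (fun q => (√(f q))⁻¹ * (Y q).1) p = _ := (hsi.mul hY1).fderiv
  have hφ3 : fderiv ℝ (fun q => -((√(f q))⁻¹ * (Y q).2.1)) p = _ := (hsi.mul hY2).neg.fderiv
  simp only [Ften, gm, cov, dd, phiV_xi3s, c1, c2, c3]
  rw [hφ1, hφ2, hφ3]
  simp only [structureTensorAt, omegaAt, betaAt, etaAt, add_apply, smul_apply, neg_apply,
    smul_eq_mul, Prod.fst_sub, Prod.snd_sub, Function.comp_apply,
    fderiv_apply_eq_partials f p (X p)]
  set s := √(f p)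
  rw [show f p = s ^ 2 from (Real.sq_sqrt hfp.le).symm]
  field_simp
  ring

lemma structureTensorAt_of_pdy_of_pdz {f : Pt → ℝ} {p : Pt} (hy : pdy f p = 0)
    (hz : pdz f p = 0) (u v w : Pt) :
    structureTensorAt f p u v w = pdx f p / (2 * √(f p)) * etaAt f p u * omegaAt f p v w := by
  simp only [structureTensorAt, hy, hz]
  ring

lemma structureTensorAt_dy_dx_dy (f : Pt → ℝ) (p : Pt) :
    structureTensorAt f p (0, 1, 0) (1, 0, 0) (0, 1, 0) = -(pdy f p / (2 * f p * √(f p))) := by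
  simp only [structureTensorAt, omegaAt, betaAt, etaAt]
  ring

lemma structureTensorAt_ker_dx_dy (f : Pt → ℝ) (p : Pt) :
    structureTensorAt f p (f p, 0, -1) (1, 0, 0) (0, 1, 0) = pdz f p / (2 * f p * √(f p)) := by
  simp only [structureTensorAt, omegaAt, betaAt, etaAt]
  ring

lemma structureTensorAt_dx_dy_dx {f : Pt → ℝ} {p : Pt} (hfp : 0 < f p) :
    structureTensorAt f p (1, 0, 0) (0, 1, 0) (1, 0, 0) = pdx f p / (2 * f p * √(f p)) := by
  have hs : √(f p) ^ 2 = f p := Real.sq_sqrt hfp.le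
  simp only [structureTensorAt, omegaAt, betaAt, etaAt]
  set s := √(f p)
  rw [← hs]
  field_simp
  ring

lemma etaAt_xiVs {f : Pt → ℝ} {p : Pt} (hfp : 0 < f p) : etaAt f p (xiVs f p) = 1 := by
  have hs : √(f p) ^ 2 = f p := Real.sq_sqrt hfp.le
  have hs0 : √(f p) ≠ 0 := (Real.sqrt_pos.2 hfp).ne'
  simp only [etaAt, xiVs]
  set s := √(f p)
  rw [← hs]
  field_simp
  ring

lemma omegaAt_xiVs {f : Pt → ℝ} {p : Pt} (hfp : 0 < f p) (w : Pt) :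
    omegaAt f p (xiVs f p) w = -w.2.1 := by
  rw [omegaAt, etaAt_xiVs hfp]
  simp [xiVs]

lemma differentiableAt_xiVs {f : Pt → ℝ} {p : Pt} (hf : DifferentiableAt ℝ f p)
    (hfp : 0 < f p) : DifferentiableAt ℝ (xiVs f) p := by
  have h : DifferentiableAt ℝ (fun q => 1 / √(f q)) p := by
    simpa only [one_div] using (hf.sqrt hfp.ne').fun_inv (Real.sqrt_pos.2 hfp).ne'
  exact (differentiableAt_const _).prodMk ((differentiableAt_const _).prodMk h)

lemma contDiff_E (i : Fin 3) : ContDiff ℝ (⊤ : ℕ∞) (E i) := by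
  fin_cases i <;> simpa [E] using contDiff_const

def StructureVanishesNowhere (f : Pt → ℝ) : Prop :=
  ∀ p : Pt, ∃ i j k : Fin 3, Ften f zeroF zeroF (xi3s f) (E i) (E j) (E k) p ≠ 0

def SatisfiesG12Identity (f : Pt → ℝ) : Prop :=
  ∀ X Y Z : VF, ContDiff ℝ (⊤ : ℕ∞) X → ContDiff ℝ (⊤ : ℕ∞) Y → ContDiff ℝ (⊤ : ℕ∞) Z →
    ∀ p : Pt, Ften f zeroF zeroF (xi3s f) X Y Z p =
      etaV f zeroF zeroF (xi3s f) X p *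
        (etaV f zeroF zeroF (xi3s f) Y p * Ften f zeroF zeroF (xi3s f) (xiVs f) (xiVs f) Z p -
          etaV f zeroF zeroF (xi3s f) Z p * Ften f zeroF zeroF (xi3s f) (xiVs f) (xiVs f) Y p)

lemma SatisfiesG12Identity.Ften_eq_zero {f : Pt → ℝ} (h : SatisfiesG12Identity f) {X Y Z : VF}
    (hX : ContDiff ℝ (⊤ : ℕ∞) X) (hY : ContDiff ℝ (⊤ : ℕ∞) Y) (hZ : ContDiff ℝ (⊤ : ℕ∞) Z)
    {p : Pt} (hη : etaV f zeroF zeroF (xi3s f) X p = 0) :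
    Ften f zeroF zeroF (xi3s f) X Y Z p = 0 := by
  rw [h X Y Z hX hY hZ p, hη, zero_mul]

lemma two_mul_mul_sqrt_ne_zero {f : Pt → ℝ} {p : Pt} (hfp : 0 < f p) :
    2 * f p * √(f p) ≠ 0 := by
  have := Real.sqrt_pos.2 hfp
  positivity

lemma SatisfiesG12Identity.pdy_eq_zero_and_pdz_eq_zero {f : Pt → ℝ}
    (hf : ContDiff ℝ (⊤ : ℕ∞) f) (hfpos : ∀ p : Pt, 0 < f p) (h : SatisfiesG12Identity f) :
    (∀ p : Pt, pdy f p = 0) ∧ (∀ p : Pt, pdz f p = 0) := by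
  have hF : ∀ (X : VF) (p : Pt), Ften f zeroF zeroF (xi3s f) X (E 0) (E 1) p
      = structureTensorAt f p (X p) (1, 0, 0) (0, 1, 0) := fun X p =>
    Ften_eq_structureTensorAt (hf.differentiable (by simp) p) (hfpos p) X (E 0) (E 1)
      ((contDiff_E 0).differentiable (by simp) p)
  have hker : ContDiff ℝ (⊤ : ℕ∞) (fun q : Pt => (f q, (0 : ℝ), (-1 : ℝ))) :=
    hf.prodMk contDiff_const
  refine ⟨fun p => ?_, fun p => ?_⟩
  · have hy := h.Ften_eq_zero (contDiff_E 1) (contDiff_E 0) (contDiff_E 1) (p := p)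
      (by simp [etaV_xi3s, E, etaAt])
    rwa [hF, show E 1 p = (0, 1, 0) from rfl, structureTensorAt_dy_dx_dy, neg_eq_zero,
      div_eq_zero_iff, or_iff_left (two_mul_mul_sqrt_ne_zero (hfpos p))] at hy
  · have hz := h.Ften_eq_zero hker (contDiff_E 0) (contDiff_E 1) (p := p)
      (by simp [etaV_xi3s, etaAt])
    rwa [hF, structureTensorAt_ker_dx_dy, div_eq_zero_iff,
      or_iff_left (two_mul_mul_sqrt_ne_zero (hfpos p))] at hz

lemma satisfiesG12Identity_of_pdy_of_pdz {f : Pt → ℝ} (hf : Differentiable ℝ f)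
    (hfpos : ∀ p : Pt, 0 < f p) (hy : ∀ p : Pt, pdy f p = 0) (hz : ∀ p : Pt, pdz f p = 0) :
    SatisfiesG12Identity f := by
  intro X Y Z _ hY _ p
  have hξ := differentiableAt_xiVs (hf p) (hfpos p)
  simp only [etaV_xi3s, Ften_eq_structureTensorAt (hf p) (hfpos p) _ _ _ hξ,
    Ften_eq_structureTensorAt (hf p) (hfpos p) X Y Z (hY.differentiable (by simp) p),
    structureTensorAt_of_pdy_of_pdz (hy p) (hz p), etaAt_xiVs (hfpos p),
    omegaAt_xiVs (hfpos p)]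
  simp only [omegaAt]
  ring

lemma structureVanishesNowhere_iff {f : Pt → ℝ} (hf : Differentiable ℝ f)
    (hfpos : ∀ p : Pt, 0 < f p) (hy : ∀ p : Pt, pdy f p = 0) (hz : ∀ p : Pt, pdz f p = 0) :
    StructureVanishesNowhere f ↔ ∀ p : Pt, pdx f p ≠ 0 := by
  have hF : ∀ (i j k : Fin 3) (p : Pt), Ften f zeroF zeroF (xi3s f) (E i) (E j) (E k) p
      = structureTensorAt f p (E i p) (E j p) (E k p) := fun i j k p =>
    Ften_eq_structureTensorAt (hf p) (hfpos p) _ _ _ ((contDiff_E j).differentiable (by simp) p)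
  refine ⟨fun h p hx => ?_, fun hx p => ⟨0, 1, 0, ?_⟩⟩
  · obtain ⟨i, j, k, hne⟩ := h p
    rw [hF, structureTensorAt_of_pdy_of_pdz (hy p) (hz p), hx] at hne
    simp at hne
  · rw [hF]
    exact (structureTensorAt_dx_dy_dx (hfpos p)).trans_ne
      (div_ne_zero (hx p) (two_mul_mul_sqrt_ne_zero (hfpos p)))

/-- Theorem 4.3(iii): the structure with `ξ₁ = ξ₂ = 0`, `ξ₃ = 1/√f` lies strictly in
the class `G₁₂` iff `f_y ≡ 0`, `f_z ≡ 0` and `f_x` vanishes nowhere. -/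
theorem G12_iff (f : Pt → ℝ) (hf : ContDiff ℝ (⊤ : ℕ∞) f) (hfpos : ∀ p : Pt, 0 < f p) :
    ((∀ p : Pt, ∃ i j k : Fin 3, Ften f zeroF zeroF (xi3s f) (E i) (E j) (E k) p ≠ 0) ∧
      (∀ X Y Z : VF, ContDiff ℝ (⊤ : ℕ∞) X → ContDiff ℝ (⊤ : ℕ∞) Y →
        ContDiff ℝ (⊤ : ℕ∞) Z → ∀ p : Pt,
          Ften f zeroF zeroF (xi3s f) X Y Z p =
            etaV f zeroF zeroF (xi3s f) X p *
              (etaV f zeroF zeroF (xi3s f) Y p *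
                  Ften f zeroF zeroF (xi3s f) (xiVs f) (xiVs f) Z p -
                etaV f zeroF zeroF (xi3s f) Z p *
                  Ften f zeroF zeroF (xi3s f) (xiVs f) (xiVs f) Y p))) ↔
    ((∀ p : Pt, pdy f p = 0) ∧ (∀ p : Pt, pdz f p = 0) ∧ (∀ p : Pt, pdx f p ≠ 0)) := by
  change StructureVanishesNowhere f ∧ SatisfiesG12Identity f ↔ _
  have hfd : Differentiable ℝ f := hf.differentiable (by simp)
  constructor
  · rintro ⟨hnz, hG12⟩
    obtain ⟨hy, hz⟩ := hG12.pdy_eq_zero_and_pdz_eq_zero hf hfpos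
    exact ⟨hy, hz, (structureVanishesNowhere_iff hfd hfpos hy hz).1 hnz⟩
  · rintro ⟨hy, hz, hx⟩
    exact ⟨(structureVanishesNowhere_iff hfd hfpos hy hz).2 hx,
      satisfiesG12Identity_of_pdy_of_pdz hfd hfpos hy hz⟩
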